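/- arXiv:1508.07634 — 4 statements merged into one kernel-verified Lean document; each statement's English description precedes it below -/
import Mathlib

section
/- For the GGPS pdf f(x) = (θαβ/C(θ)) e^{γx}(1-t)t^{α-1} C'(θ t^α) with t = 1-e^{-(β/γ)(e^{γx}-1)}: lim_{x→0⁺} f(x) = ∞ if 0 < α < 1, lim_{x→0⁺} f(x) = C'(0)θβ/C(θ) if α = 1, and lim_{x→0⁺} f(x) = 0 if α > 1. -/
open Real Filter Set
open scoped Topology

/-!
Every factor of `f` other than `t ^ (α - 1)` has a finite limit as `x → 0⁺`, and the product of
these limits is `θ α β D(0) / C(θ) > 0`. Since `t x → 0⁺`, the behaviour of `f` is that of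
`t ^ (α - 1)`: it blows up for `α < 1`, is constant for `α = 1` and vanishes for `α > 1`.
-/

/-- The Gompertz cdf, the baseline distribution of the GGPS family; `t` in the pdf. -/
noncomputable def gompertzCDF (β γ x : ℝ) : ℝ :=
  1 - exp (-(β / γ) * (exp (γ * x) - 1))

lemma gompertzCDF_zero (β γ : ℝ) : gompertzCDF β γ 0 = 0 := by
  simp [gompertzCDF]

lemma continuous_gompertzCDF (β γ : ℝ) : Continuous (gompertzCDF β γ) := by
  unfold gompertzCDF
  fun_prop

lemma gompertzCDF_pos {β γ x : ℝ} (hβ : 0 < β) (hγ : 0 < γ) (hx : 0 < x) :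
    0 < gompertzCDF β γ x := by
  have hexp : 0 < exp (γ * x) - 1 := sub_pos.2 (one_lt_exp_iff.2 (mul_pos hγ hx))
  have hexponent : 0 < β / γ * (exp (γ * x) - 1) := mul_pos (div_pos hβ hγ) hexp
  rw [gompertzCDF, sub_pos, exp_lt_one_iff, neg_mul]
  exact neg_neg_of_pos hexponent

lemma tendsto_gompertzCDF_nhdsGT_zero {β γ : ℝ} (hβ : 0 < β) (hγ : 0 < γ) :
    Tendsto (gompertzCDF β γ) (𝓝[>] 0) (𝓝[>] 0) := by
  refine tendsto_nhdsWithin_iff.2 ⟨?_, eventually_nhdsWithin_of_forall fun x hx ↦ ?_⟩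
  · simpa [gompertzCDF_zero] using
      ((continuous_gompertzCDF β γ).tendsto 0).mono_left nhdsWithin_le_nhds
  · exact gompertzCDF_pos hβ hγ hx

theorem ggps_pdf_limit_at_zero (α β γ θ Cθ : ℝ) (D : ℝ → ℝ)
    (hα : 0 < α) (hβ : 0 < β) (hγ : 0 < γ) (hθ : 0 < θ) (hCθ : 0 < Cθ)
    (hD : ContinuousAt D 0) (hD0 : 0 < D 0) :
    let t : ℝ → ℝ := fun x => 1 - Real.exp (-(β / γ) * (Real.exp (γ * x) - 1))
    let f : ℝ → ℝ := fun x =>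
      θ * α * β / Cθ * Real.exp (γ * x) * (1 - t x) * (t x) ^ (α - 1) * D (θ * (t x) ^ α)
    (α < 1 → Tendsto f (nhdsWithin 0 (Set.Ioi 0)) atTop) ∧
    (α = 1 → Tendsto f (nhdsWithin 0 (Set.Ioi 0)) (nhds (D 0 * θ * β / Cθ))) ∧
    (1 < α → Tendsto f (nhdsWithin 0 (Set.Ioi 0)) (nhds 0)) := by
  intro t f
  set K := θ * α * β / Cθ
  have ht : Tendsto t (𝓝[>] 0) (𝓝[>] 0) := tendsto_gompertzCDF_nhdsGT_zero hβ hγ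
  have ht0 : Tendsto t (𝓝[>] 0) (𝓝 0) := tendsto_nhds_of_tendsto_nhdsWithin ht
  have hexp : Tendsto (fun x ↦ exp (γ * x)) (𝓝[>] 0) (𝓝 1) := by
    simpa using ((by fun_prop : Continuous fun x ↦ exp (γ * x)).tendsto 0).mono_left
      nhdsWithin_le_nhds
  have hDt : Tendsto (fun x ↦ D (θ * t x ^ α)) (𝓝[>] 0) (𝓝 (D 0)) :=
    hD.tendsto.comp <| by
      simpa [zero_rpow hα.ne'] using (ht0.rpow_const (Or.inr hα.le)).const_mul θ
  have hg : Tendsto (fun x ↦ K * exp (γ * x) * (1 - t x) * D (θ * t x ^ α)) (𝓝[>] 0)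
      (𝓝 (K * D 0)) := by
    simpa using ((hexp.const_mul K).mul (ht0.const_sub 1)).mul hDt
  have hf : f = fun x ↦ K * exp (γ * x) * (1 - t x) * D (θ * t x ^ α) * t x ^ (α - 1) := by
    funext x
    ring
  rw [hf]
  refine ⟨fun hα1 ↦ ?_, fun hα1 ↦ ?_, fun hα1 ↦ ?_⟩
  · exact hg.pos_mul_atTop (by positivity) ((tendsto_rpow_neg_nhdsGT_zero (by linarith)).comp ht)
  · subst hα1
    simp only [sub_self, rpow_zero, mul_one]
    convert hg using 2
    ring
  · simpa [zero_rpow (sub_pos.2 hα1).ne'] using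
      hg.mul (ht0.rpow_const (Or.inr (sub_pos.2 hα1).le))
end

section
/- For the GGPS hazard rate h with γ > 0, lim_{x→∞} h(x) = ∞. More precisely, h(x) = θαβ e^{γx}(1-t)t^{α-1}C'(θt^α)/(C(θ)-C(θt^α)) with t = 1-e^{-(β/γ)(e^{γx}-1)} tends to infinity as x → ∞, provided C' is continuous and positive at θ. -/
open Real Filter Set Topology

/-!
As `x → ∞`, `t x → 1` with `t x ≠ 1`. With `g s = C (θ * s ^ α)` we have
`C θ - C (θ * t x ^ α) = (1 - t x) * slope g 1 (t x)`, and the slope tends to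
`g' 1 = D θ * (θ * α)`. Hence `θ * α * (1 - t x) / (C θ - C (θ * t x ^ α)) → 1 / D θ`, and the
hazard rate is `β * exp (γ * x)` times a factor tending to `1`.
-/

theorem tendsto_one_sub_exp_neg_mul_exp_sub_one {c γ : ℝ} (hc : 0 < c) (hγ : 0 < γ) :
    Tendsto (fun x => 1 - exp (-c * (exp (γ * x) - 1))) atTop (𝓝[≠] 1) := by
  have hexp : Tendsto (fun x => exp (γ * x) - 1) atTop atTop :=
    tendsto_atTop_add_const_right _ (-1) (tendsto_exp_atTop.comp (tendsto_id.const_mul_atTop hγ))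
  have hlim : Tendsto (fun x => exp (-c * (exp (γ * x) - 1))) atTop (𝓝 0) :=
    tendsto_exp_atBot.comp (hexp.const_mul_atTop_of_neg (neg_neg_of_pos hc))
  refine tendsto_nhdsWithin_iff.mpr ⟨by simpa using tendsto_const_nhds.sub hlim, ?_⟩
  exact Eventually.of_forall fun x => by simp [(exp_pos _).ne']

theorem hasDerivAt_comp_const_mul_rpow_one {f : ℝ → ℝ} {f' a p : ℝ}
    (hf : HasDerivAt f f' a) :
    HasDerivAt (fun t => f (a * t ^ p)) (f' * (a * p)) 1 := by
  have hpow : HasDerivAt (fun t : ℝ => a * t ^ p) (a * p) 1 := by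
    simpa using (hasDerivAt_rpow_const (p := p) (Or.inl one_ne_zero)).const_mul a
  exact (by simpa using hf : HasDerivAt f f' (a * 1 ^ p)).comp 1 hpow

theorem ggps_hazard_limit_at_infty_general (α β γ θ : ℝ) (C D : ℝ → ℝ)
    (hα : 0 < α) (hβ : 0 < β) (hγ : 0 < γ) (hθ : 0 < θ)
    (hderiv : ∀ y : ℝ, HasDerivAt C (D y) y)
    (hD : ContinuousAt D θ) (hDθ : 0 < D θ) :
    let t : ℝ → ℝ := fun x => 1 - Real.exp (-(β / γ) * (Real.exp (γ * x) - 1))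
    Tendsto (fun x =>
        θ * α * β * Real.exp (γ * x) * (1 - t x) * (t x) ^ (α - 1) * D (θ * (t x) ^ α) /
          (C θ - C (θ * (t x) ^ α)))
      atTop atTop := by
  intro t
  have ht : Tendsto t atTop (𝓝[≠] 1) :=
    tendsto_one_sub_exp_neg_mul_exp_sub_one (by positivity) hγ
  have hpow (p : ℝ) : Tendsto (fun x => t x ^ p) atTop (𝓝 1) := by
    have hcont := continuousAt_rpow_const 1 p (Or.inl one_ne_zero)
    simpa [Function.comp_def] using hcont.tendsto.comp (ht.mono_right nhdsWithin_le_nhds)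
  have hD' : Tendsto (fun x => D (θ * t x ^ α)) atTop (𝓝 (D θ)) :=
    hD.tendsto.comp (by simpa using (hpow α).const_mul θ)
  have hslope : Tendsto (fun x => slope (fun s => C (θ * s ^ α)) 1 (t x)) atTop
      (𝓝 (D θ * (θ * α))) :=
    (hasDerivAt_iff_tendsto_slope.mp (hasDerivAt_comp_const_mul_rpow_one (hderiv θ))).comp ht
  have hgrowth : Tendsto (fun x => β * exp (γ * x)) atTop atTop :=
    (tendsto_exp_atTop.comp (tendsto_id.const_mul_atTop hγ)).const_mul_atTop hβ
  have hratio := ((hpow (α - 1)).mul hD').mul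
    (tendsto_const_nhds (x := θ * α) |>.div hslope (by positivity))
  refine (hgrowth.atTop_mul_pos (by positivity) hratio).congr fun x => ?_
  simp only [slope, vsub_eq_sub, smul_eq_mul, one_rpow, mul_one]
  rw [Pi.div_apply, div_eq_mul_inv _ (_ * _), mul_inv, inv_inv, ← neg_sub (C θ), inv_neg]
  ring

theorem ggps_hazard_limit_at_infty (α β γ θ : ℝ) (C D : ℝ → ℝ)
    (hα : 0 < α) (hβ : 0 < β) (hγ : 0 < γ) (hθ : 0 < θ)
    (hderiv : ∀ y : ℝ, HasDerivAt C (D y) y)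
    (hD : ContinuousAt D θ) (hDθ : 0 < D θ)
    (hlt : ∀ x : ℝ,
      C (θ * (1 - Real.exp (-(β / γ) * (Real.exp (γ * x) - 1))) ^ α) < C θ) :
    let t : ℝ → ℝ := fun x => 1 - Real.exp (-(β / γ) * (Real.exp (γ * x) - 1))
    Tendsto (fun x =>
        θ * α * β * Real.exp (γ * x) * (1 - t x) * (t x) ^ (α - 1) * D (θ * (t x) ^ α) /
          (C θ - C (θ * (t x) ^ α)))
      atTop atTop :=
  ggps_hazard_limit_at_infty_general α β γ θ C D hα hβ hγ hθ hderiv hD hDθ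
end

section
/- For the generalized Gompertz-geometric (GGG) hazard function h(u) expressed in the variable u = t(x) ∈ (0,1), define τ(u) = (1-α)/u + 2αθ u^{α-1}/(1 - θ u^α) with 0 < θ < 1, α ≥ 1. Then τ is increasing on (0,1), and hence the GGG hazard rate is increasing. -/
open Real Set

theorem monotoneOn_const_div_of_nonpos {𝕜 : Type*} [Field 𝕜] [LinearOrder 𝕜]
    [IsStrictOrderedRing 𝕜] {c : 𝕜} (hc : c ≤ 0) :
    MonotoneOn (fun u : 𝕜 => c / u) (Ioi 0) := fun x hx _ _ hxy => by
  simpa only [div_eq_mul_inv] using mul_le_mul_of_nonpos_left (inv_anti₀ hx hxy) hc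

theorem MonotoneOn.div_strictAntiOn {β 𝕜 : Type*} [Preorder β] [Field 𝕜] [LinearOrder 𝕜]
    [IsStrictOrderedRing 𝕜] {f g : β → 𝕜} {s : Set β} (hf : MonotoneOn f s)
    (hg : StrictAntiOn g s) (hf0 : ∀ x ∈ s, 0 < f x) (hg0 : ∀ x ∈ s, 0 < g x) :
    StrictMonoOn (fun x => f x / g x) s := fun x hx y hy hxy =>
  calc f x / g x < f x / g y := div_lt_div_of_pos_left (hf0 x hx) (hg0 y hy) (hg hx hy hxy)
    _ ≤ f y / g y := div_le_div_of_nonneg_right (hf hx hy hxy.le) (hg0 y hy).le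

theorem strictAntiOn_one_sub_mul_rpow {θ α : ℝ} (hθ : 0 < θ) (hα : 0 < α) :
    StrictAntiOn (fun u : ℝ => 1 - θ * u ^ α) (Ici 0) := fun _ hx _ hy hxy =>
  sub_lt_sub_left (mul_lt_mul_of_pos_left (strictMonoOn_rpow_Ici_of_exponent_pos hα hx hy hxy) hθ) 1

theorem one_sub_mul_rpow_pos {θ α u : ℝ} (hθ : θ ≤ 1) (hα : 0 < α) (hu0 : 0 ≤ u) (hu1 : u < 1) :
    0 < 1 - θ * u ^ α := by
  have hpow0 : 0 ≤ u ^ α := rpow_nonneg hu0 α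
  have hpow1 : u ^ α < 1 := rpow_lt_one hu0 hu1 hα
  nlinarith

theorem strictMonoOn_mul_rpow_div_one_sub_mul_rpow {c θ α : ℝ} (hc : 0 < c) (hθ0 : 0 < θ)
    (hθ1 : θ < 1) (hα : 1 ≤ α) :
    StrictMonoOn (fun u : ℝ => c * u ^ (α - 1) / (1 - θ * u ^ α)) (Ioo 0 1) := by
  have hα0 : 0 < α := by linarith
  refine MonotoneOn.div_strictAntiOn ?_
    ((strictAntiOn_one_sub_mul_rpow hθ0 hα0).mono fun _ hu => hu.1.le)
    (fun u hu => mul_pos hc (rpow_pos_of_pos hu.1 _))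
    (fun u hu => one_sub_mul_rpow_pos hθ1.le hα0 hu.1.le hu.2)
  have hpow : MonotoneOn (fun u : ℝ => u ^ (α - 1)) (Ici 0) :=
    monotoneOn_rpow_Ici_of_exponent_nonneg (by linarith)
  exact fun x hx y hy hxy => mul_le_mul_of_nonneg_left (hpow hx.1.le hy.1.le hxy) hc.le

theorem ggg_hazard_increasing (α θ : ℝ) (hα : 1 ≤ α) (hθ0 : 0 < θ) (hθ1 : θ < 1) :
    StrictMonoOn
      (fun u : ℝ => (1 - α) / u + 2 * α * θ * u ^ (α - 1) / (1 - θ * u ^ α))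
      (Set.Ioo 0 1) :=
  ((monotoneOn_const_div_of_nonpos (by linarith)).mono Ioo_subset_Ioi_self).add_strictMono
    (strictMonoOn_mul_rpow_div_one_sub_mul_rpow (by positivity) hθ0 hθ1 hα)
end

section
/- For the generalized Gompertz-Poisson (GGP) case, define η(u) = log h(u) where h(u) = θαβ u^{α-1} e^{θu^α}/(e^θ - e^{θu^α}) on u ∈ (0,1). If α ≥ 1, then η'(u) = (α-1)/u + αθ e^θ u^{α-1}/(e^θ - e^{θu^α}) > 0 for all u ∈ (0,1), so the GGP hazard rate is increasing. -/
/-! Since `u ^ α < 1` on `(0, 1)`, the denominator `e^θ - e^{θ u^α}` is positive, so both terms of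
`η'` are nonnegative and the second is positive. For the hazard itself no derivative is needed:
for `α ≥ 1` the numerator `u^{α-1} e^{θ u^α}` is strictly increasing and the positive denominator
is decreasing. -/

open Real Set

section Order

variable {ι 𝕜 : Type*} [Preorder ι] {s : Set ι} {f g : ι → 𝕜}

lemma MonotoneOn.mul_strictMonoOn_of_pos_of_nonneg [Semiring 𝕜] [LinearOrder 𝕜]
    [IsStrictOrderedRing 𝕜] (hf : MonotoneOn f s) (hg : StrictMonoOn g s)
    (hf0 : ∀ x ∈ s, 0 < f x) (hg0 : ∀ x ∈ s, 0 ≤ g x) :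
    StrictMonoOn (fun x => f x * g x) s := fun x hx y hy hxy =>
  mul_lt_mul' (hf hx hy hxy.le) (hg hx hy hxy) (hg0 x hx) (hf0 y hy)

lemma StrictMonoOn.div_of_antitoneOn [Semifield 𝕜] [LinearOrder 𝕜] [IsStrictOrderedRing 𝕜]
    (hf : StrictMonoOn f s) (hg : AntitoneOn g s)
    (hf0 : ∀ x ∈ s, 0 ≤ f x) (hg0 : ∀ x ∈ s, 0 < g x) :
    StrictMonoOn (fun x => f x / g x) s := fun _ hx y hy hxy =>
  div_lt_div₀ (hf hx hy hxy) (hg hx hy hxy.le) (hf0 y hy) (hg0 y hy)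

end Order

lemma strictMonoOn_exp_mul_rpow {θ α : ℝ} (hθ : 0 < θ) (hα : 0 < α) :
    StrictMonoOn (fun u : ℝ => exp (θ * u ^ α)) (Ici 0) := fun _ hu _ hv huv =>
  exp_lt_exp.2 <| mul_lt_mul_of_pos_left (strictMonoOn_rpow_Ici_of_exponent_pos hα hu hv huv) hθ

lemma exp_mul_rpow_lt_exp {θ α u : ℝ} (hθ : 0 < θ) (hα : 0 < α) (hu : u ∈ Ioo 0 1) :
    exp (θ * u ^ α) < exp θ := by
  simpa using strictMonoOn_exp_mul_rpow hθ hα hu.1.le (mem_Ici.2 zero_le_one) hu.2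

lemma strictMonoOn_mul_rpow_mul_exp_mul_rpow {c θ α : ℝ} (hc : 0 < c) (hθ : 0 < θ) (hα : 1 ≤ α) :
    StrictMonoOn (fun u : ℝ => c * u ^ (α - 1) * exp (θ * u ^ α)) (Ioi 0) := by
  have hsub : Ioi (0:ℝ) ⊆ Ici 0 := Ioi_subset_Ici_self
  have hfactor : MonotoneOn (fun u : ℝ => c * u ^ (α - 1)) (Ioi 0) := fun u hu v hv huv =>
    mul_le_mul_of_nonneg_left
      (monotoneOn_rpow_Ici_of_exponent_nonneg (by linarith) (hsub hu) (hsub hv) huv) hc.le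
  exact hfactor.mul_strictMonoOn_of_pos_of_nonneg
    ((strictMonoOn_exp_mul_rpow hθ (by linarith)).mono hsub)
    (fun u hu => mul_pos hc (rpow_pos_of_pos hu _)) fun _ _ => (exp_pos _).le

theorem ggp_hazard_increasing (α β θ : ℝ) (hα : 1 ≤ α) (hβ : 0 < β) (hθ : 0 < θ) :
    (∀ u ∈ Set.Ioo (0:ℝ) 1,
      0 < (α - 1) / u + α * θ * Real.exp θ * u ^ (α - 1) /
        (Real.exp θ - Real.exp (θ * u ^ α))) ∧
    StrictMonoOn
      (fun u : ℝ => θ * α * β * u ^ (α - 1) * Real.exp (θ * u ^ α) /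
        (Real.exp θ - Real.exp (θ * u ^ α)))
      (Set.Ioo 0 1) := by
  have hα0 : 0 < α := by linarith
  have hden : ∀ u ∈ Ioo (0:ℝ) 1, 0 < exp θ - exp (θ * u ^ α) := fun u hu =>
    sub_pos.2 (exp_mul_rpow_lt_exp hθ hα0 hu)
  refine ⟨fun u hu => ?_, ?_⟩
  · have hpow : 0 < u ^ (α - 1) := rpow_pos_of_pos hu.1 _
    exact add_pos_of_nonneg_of_pos (div_nonneg (by linarith) hu.1.le)
      (div_pos (by positivity) (hden u hu))
  · have hnum := strictMonoOn_mul_rpow_mul_exp_mul_rpow (by positivity : 0 < θ * α * β) hθ hα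
    have hden_anti : AntitoneOn (fun u : ℝ => exp θ - exp (θ * u ^ α)) (Ioo 0 1) :=
      fun _ hu _ hv huv => sub_le_sub_left
        ((strictMonoOn_exp_mul_rpow hθ hα0).monotoneOn hu.1.le hv.1.le huv) _
    exact (hnum.mono Ioo_subset_Ioi_self).div_of_antitoneOn hden_anti
      (fun u hu => by have := rpow_pos_of_pos hu.1 (α - 1); positivity) hden
end
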